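/- Let 𝒳^n_↑ be the set of strictly increasing n-tuples of positive reals. The map sending the orbit of (d,v) ∈ Θ^{can} under the (S_n ⋉_φ 𝕋^n)-action to (d_↑, 𝓡(Γ_σ(v))) ∈ 𝒳^n_↑ × ℝ_+^n — where σ is the unique permutation sorting d into increasing order d_↑, Γ_σ(v) permutes v's coordinates accordingly, and 𝓡(w) = (w_1² + w_{n+1}², …, w_n² + w_{2n}²) — is a well-defined bijection between the orbit space Θ^{can}/(S_n ⋉_φ 𝕋^n) and 𝒳^n_↑ × ℝ_+^n. -/

import Mathlib

noncomputable section
open Matrix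

/-- Block rotation: rotate the plane spanned by the `i`-th and `(n+i)`-th coordinates
of `v` by the angle `θ i`. -/
def rotV {n : ℕ} (θ : Fin n → Real.Angle) (v : Fin n ⊕ Fin n → ℝ) :
    Fin n ⊕ Fin n → ℝ :=
  Sum.elim (fun i => (θ i).cos * v (Sum.inl i) - (θ i).sin * v (Sum.inr i))
           (fun i => (θ i).sin * v (Sum.inl i) + (θ i).cos * v (Sum.inr i))

/-- Block permutation `P = diag(P_σ, P_σ)` acting on `v`, `(P_σ x)_i = x_{σ⁻¹ i}`. -/
def permV {n : ℕ} (σ : Equiv.Perm (Fin n)) (v : Fin n ⊕ Fin n → ℝ) :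
    Fin n ⊕ Fin n → ℝ :=
  Sum.elim (fun i => v (Sum.inl (σ⁻¹ i))) (fun i => v (Sum.inr (σ⁻¹ i)))

/-- The map `Γ_{(σ,θ)}(d, v) = (P_σ d, R_θ P v)`. -/
def Gamma {n : ℕ} (σ : Equiv.Perm (Fin n)) (θ : Fin n → Real.Angle)
    (p : (Fin n → ℝ) × (Fin n ⊕ Fin n → ℝ)) :
    (Fin n → ℝ) × (Fin n ⊕ Fin n → ℝ) :=
  (p.1 ∘ ⇑σ⁻¹, rotV θ (permV σ p.2))

/-- The canonical parameter set `Θ^{can}`. -/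
def Canonical {n : ℕ} (p : (Fin n → ℝ) × (Fin n ⊕ Fin n → ℝ)) : Prop :=
  (∀ i, 0 < p.1 i) ∧ Function.Injective p.1 ∧
    ∀ l : Fin n, 0 < p.2 (Sum.inl l) ^ 2 + p.2 (Sum.inr l) ^ 2

/-- Same orbit under the `(S_n ⋉ 𝕋ⁿ)`-action. -/
def SameOrbit {n : ℕ} (p q : (Fin n → ℝ) × (Fin n ⊕ Fin n → ℝ)) : Prop :=
  ∃ (σ : Equiv.Perm (Fin n)) (θ : Fin n → Real.Angle), Gamma σ θ p = q

/-- The map `(d,v) ↦ (d_↑, 𝓡(Γ_σ v))` using the sorting permutation of `d`. -/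
def sortMap {n : ℕ} (p : (Fin n → ℝ) × (Fin n ⊕ Fin n → ℝ)) :
    (Fin n → ℝ) × (Fin n → ℝ) :=
  (p.1 ∘ Tuple.sort p.1, fun l =>
    p.2 (Sum.inl (Tuple.sort p.1 l)) ^ 2 + p.2 (Sum.inr (Tuple.sort p.1 l)) ^ 2)

/-! The torus factor rotates each plane `(v_l, v_{n+l})`, and its orbits there are exactly the
circles of fixed `v_l² + v_{n+l}²`; hence `(d, v)` and `(d', v')` lie in one orbit iff some
permutation carries the pairs `(d_l, 𝓡(v)_l)` onto the pairs `(d'_l, 𝓡(v')_l)`. Since the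
entries of `d` are distinct, sorting by `d` is a complete invariant for this permutation action.
Every increasing `d` is already sorted, so `(d, (√r, 0))` is a preimage of `(d, r)`. -/

/-- The map `𝓡`, `𝓡(w)_l = w_l² + w_{n+l}²`. -/
def blockNormSq {ι : Type*} (v : ι ⊕ ι → ℝ) (l : ι) : ℝ :=
  v (Sum.inl l) ^ 2 + v (Sum.inr l) ^ 2

lemma sortMap_eq {n : ℕ} (p : (Fin n → ℝ) × (Fin n ⊕ Fin n → ℝ)) :
    sortMap p = (p.1 ∘ Tuple.sort p.1, blockNormSq p.2 ∘ Tuple.sort p.1) :=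
  rfl

lemma Real.Angle.exists_rotation_eq {a b c d : ℝ} (h : a ^ 2 + b ^ 2 = c ^ 2 + d ^ 2) :
    ∃ θ : Real.Angle, θ.cos * a - θ.sin * b = c ∧ θ.sin * a + θ.cos * b = d := by
  by_cases hz : (⟨a, b⟩ : ℂ) = 0
  · obtain ⟨rfl, rfl⟩ : a = 0 ∧ b = 0 := by simpa [Complex.ext_iff] using hz
    obtain ⟨rfl, rfl⟩ : c = 0 ∧ d = 0 := by
      constructor <;> nlinarith [sq_nonneg c, sq_nonneg d]
    exact ⟨0, by simp⟩
  have hnorm : ‖(⟨c, d⟩ : ℂ) / ⟨a, b⟩‖ = 1 := by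
    rw [norm_div, div_eq_one_iff_eq (norm_ne_zero_iff.2 hz), Complex.norm_def, Complex.norm_def,
      Complex.normSq_mk, Complex.normSq_mk]
    congr 1; nlinarith
  -- rotating `(a, b)` by `θ` is multiplying `a + b i` by `exp (θ i)`
  obtain ⟨θ, hθ⟩ := (Complex.norm_eq_one_iff _).1 hnorm
  have hrot := (eq_div_iff hz).1 hθ
  refine ⟨θ, ?_, ?_⟩
  · simpa [Complex.exp_ofReal_mul_I_re, Complex.exp_ofReal_mul_I_im] using congrArg Complex.re hrot
  · simpa [Complex.exp_ofReal_mul_I_re, Complex.exp_ofReal_mul_I_im, add_comm]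
      using congrArg Complex.im hrot

lemma blockNormSq_rotV {n : ℕ} (θ : Fin n → Real.Angle) (v : Fin n ⊕ Fin n → ℝ) :
    blockNormSq (rotV θ v) = blockNormSq v := by
  funext l
  have := Real.Angle.cos_sq_add_sin_sq (θ l)
  simp only [blockNormSq, rotV, Sum.elim_inl, Sum.elim_inr]
  linear_combination (v (Sum.inl l) ^ 2 + v (Sum.inr l) ^ 2) * this

lemma blockNormSq_permV {n : ℕ} (σ : Equiv.Perm (Fin n)) (v : Fin n ⊕ Fin n → ℝ) :
    blockNormSq (permV σ v) = blockNormSq v ∘ ⇑σ⁻¹ :=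
  rfl

lemma exists_rotV_eq_iff {n : ℕ} (v w : Fin n ⊕ Fin n → ℝ) :
    (∃ θ, rotV θ v = w) ↔ blockNormSq v = blockNormSq w := by
  refine ⟨fun ⟨θ, hθ⟩ => hθ ▸ (blockNormSq_rotV θ v).symm, fun h => ?_⟩
  choose θ hinl hinr using fun l => Real.Angle.exists_rotation_eq (congrFun h l)
  refine ⟨θ, funext ?_⟩
  rintro (l | l)
  exacts [hinl l, hinr l]

lemma sameOrbit_iff {n : ℕ} {p q : (Fin n → ℝ) × (Fin n ⊕ Fin n → ℝ)} :
    SameOrbit p q ↔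
      ∃ σ : Equiv.Perm (Fin n), p.1 ∘ ⇑σ⁻¹ = q.1 ∧ blockNormSq p.2 ∘ ⇑σ⁻¹ = blockNormSq q.2 := by
  simp only [SameOrbit, Gamma, Prod.ext_iff, exists_and_left, exists_rotV_eq_iff,
    blockNormSq_permV]

lemma Tuple.sort_comp_perm {n : ℕ} {α : Type*} [LinearOrder α] {f : Fin n → α}
    (hf : Function.Injective f) (σ : Equiv.Perm (Fin n)) :
    σ ∘ Tuple.sort (f ∘ σ) = Tuple.sort f :=
  hf.comp_left Tuple.comp_perm_comp_sort_eq_comp_sort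

lemma sortMap_eq_of_sameOrbit {n : ℕ} {p q : (Fin n → ℝ) × (Fin n ⊕ Fin n → ℝ)}
    (hp : Function.Injective p.1) (h : SameOrbit p q) : sortMap p = sortMap q := by
  obtain ⟨σ, hfst, hsnd⟩ := sameOrbit_iff.1 h
  have hsort := Tuple.sort_comp_perm hp σ⁻¹
  rw [sortMap_eq, sortMap_eq, ← hfst, ← hsnd, ← hsort]
  rfl

lemma Equiv.Perm.comp_inv_eq_of_comp_eq {ι X : Type*} {f g : ι → X} {α β : Equiv.Perm ι}
    (h : f ∘ α = g ∘ β) : f ∘ ⇑(β * α⁻¹)⁻¹ = g := by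
  funext i
  simpa using congrFun h (β⁻¹ i)

lemma sameOrbit_of_sortMap_eq {n : ℕ} {p q : (Fin n → ℝ) × (Fin n ⊕ Fin n → ℝ)}
    (h : sortMap p = sortMap q) : SameOrbit p q := by
  rw [sortMap_eq, sortMap_eq, Prod.mk.injEq] at h
  exact sameOrbit_iff.2 ⟨_, Equiv.Perm.comp_inv_eq_of_comp_eq h.1,
    Equiv.Perm.comp_inv_eq_of_comp_eq h.2⟩

lemma sortMap_fst_strictMono {n : ℕ} {p : (Fin n → ℝ) × (Fin n ⊕ Fin n → ℝ)}
    (hp : Function.Injective p.1) : StrictMono (sortMap p).1 :=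
  (Tuple.monotone_sort p.1).strictMono_of_injective (hp.comp (Tuple.sort p.1).injective)

lemma blockNormSq_elim_sqrt_zero {ι : Type*} {r : ι → ℝ} (hr : 0 ≤ r) :
    blockNormSq (Sum.elim (fun l => √(r l)) 0) = r := by
  funext l
  simp [blockNormSq, Real.sq_sqrt (hr l)]

lemma sortMap_of_monotone {n : ℕ} {d r : Fin n → ℝ} (hd : Monotone d) (hr : 0 ≤ r) :
    sortMap (d, Sum.elim (fun l => √(r l)) 0) = (d, r) := by
  rw [sortMap_eq, Tuple.sort_eq_refl_iff_monotone.2 hd, blockNormSq_elim_sqrt_zero hr]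
  rfl

/-- The map sending the orbit of `(d,v) ∈ Θ^{can}` to `(d_↑, 𝓡(Γ_σ v))` is a
well-defined bijection between the orbit space `Θ^{can}/(S_n ⋉ 𝕋ⁿ)` and
`𝒳ⁿ_↑ × ℝ₊ⁿ` (strictly increasing positive tuples times positive tuples). -/
theorem orbitSpace_equiv_sorted {n : ℕ} :
    (∀ p q : (Fin n → ℝ) × (Fin n ⊕ Fin n → ℝ),
        Canonical p → Canonical q → SameOrbit p q → sortMap p = sortMap q) ∧
    (∀ p q : (Fin n → ℝ) × (Fin n ⊕ Fin n → ℝ),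
        Canonical p → Canonical q → sortMap p = sortMap q → SameOrbit p q) ∧
    (∀ p : (Fin n → ℝ) × (Fin n ⊕ Fin n → ℝ), Canonical p →
        StrictMono (sortMap p).1 ∧ (∀ i, 0 < (sortMap p).1 i) ∧
          ∀ i, 0 < (sortMap p).2 i) ∧
    (∀ t : (Fin n → ℝ) × (Fin n → ℝ), StrictMono t.1 → (∀ i, 0 < t.1 i) →
        (∀ i, 0 < t.2 i) → ∃ p, Canonical p ∧ sortMap p = t) := by
  refine ⟨fun p q hp _ h => sortMap_eq_of_sameOrbit hp.2.1 h,
    fun p q _ _ h => sameOrbit_of_sortMap_eq h,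
    fun p ⟨hpos, hinj, hnorm⟩ => ⟨sortMap_fst_strictMono hinj, fun i => hpos _, fun i => hnorm _⟩,
    fun ⟨d, r⟩ hd hdpos hrpos => ?_⟩
  have hr : 0 ≤ r := fun l => (hrpos l).le
  refine ⟨_, ⟨hdpos, hd.injective, ?_⟩, sortMap_of_monotone hd.monotone hr⟩
  rw [← blockNormSq_elim_sqrt_zero hr] at hrpos
  exact hrpos
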